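/- Let C be a small commutative C*-category and A, B objects of C. In B^C_{AB}, the set of classes of restrictions that vanish identically on C_{AB} is either empty or a single point, and it is closed; consequently X^C_{AB} is an open subset of B^C_{AB} and is a locally compact Hausdorff completely regular topological space. If moreover some ω ∈ [C;ℂ] vanishes identically on C_{AB}, then B^C_{AB} is homeomorphic to the one-point (Alexandroff) compactification of X^C_{AB}. -/

import Mathlib

universe u v

/-- A small C*-category: objects `O`, hom-spaces `Hom A B` (the morphisms `C_{AB} = Hom(B,A)`),
each a complex Banach space, with bilinear submultiplicative composition and a conjugate-linear
involution satisfying the C*-identity and positivity of `x* ∘ x`. -/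
class CStarCategory (O : Type u) (Hom : O → O → Type v)
    [∀ A B, NormedAddCommGroup (Hom A B)]
    [∀ A B, NormedSpace ℂ (Hom A B)] where
  comp : ∀ {A B C : O}, Hom A B → Hom B C → Hom A C
  ident : ∀ A : O, Hom A A
  star : ∀ {A B : O}, Hom A B → Hom B A
  complete : ∀ A B : O, CompleteSpace (Hom A B)
  comp_assoc : ∀ {A B C D : O} (x : Hom A B) (y : Hom B C) (z : Hom C D),
    comp (comp x y) z = comp x (comp y z)
  ident_comp : ∀ {A B : O} (x : Hom A B), comp (ident A) x = x
  comp_ident : ∀ {A B : O} (x : Hom A B), comp x (ident B) = x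
  add_comp : ∀ {A B C : O} (x x' : Hom A B) (y : Hom B C),
    comp (x + x') y = comp x y + comp x' y
  comp_add : ∀ {A B C : O} (x : Hom A B) (y y' : Hom B C),
    comp x (y + y') = comp x y + comp x y'
  smul_comp : ∀ {A B C : O} (c : ℂ) (x : Hom A B) (y : Hom B C),
    comp (c • x) y = c • comp x y
  comp_smul : ∀ {A B C : O} (c : ℂ) (x : Hom A B) (y : Hom B C),
    comp x (c • y) = c • comp x y
  norm_comp_le : ∀ {A B C : O} (x : Hom A B) (y : Hom B C), ‖comp x y‖ ≤ ‖x‖ * ‖y‖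
  star_star : ∀ {A B : O} (x : Hom A B), star (star x) = x
  star_add : ∀ {A B : O} (x y : Hom A B), star (x + y) = star x + star y
  star_smul : ∀ {A B : O} (c : ℂ) (x : Hom A B),
    star (c • x) = (starRingEnd ℂ c) • star x
  star_comp : ∀ {A B C : O} (x : Hom A B) (y : Hom B C),
    star (comp x y) = comp (star y) (star x)
  star_ident : ∀ A : O, star (ident A) = ident A
  norm_star_comp_self : ∀ {A B : O} (x : Hom A B), ‖comp (star x) x‖ = ‖x‖ ^ 2
  star_comp_self_positive : ∀ {A B : O} (x : Hom A B),
    ∃ b : Hom B B, star b = b ∧ comp (star x) x = comp b b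

/-- A `*`-functor from a small C*-category to `ℂ`: ℂ-linear on every hom-space,
multiplicative on composition, unital on identities and compatible with the involutions. -/
structure StarFunctor (O : Type u) (Hom : O → O → Type v)
    [∀ A B, NormedAddCommGroup (Hom A B)] [∀ A B, NormedSpace ℂ (Hom A B)]
    [CStarCategory O Hom] where
  toFun : ∀ {A B : O}, Hom A B → ℂ
  map_add : ∀ {A B : O} (x y : Hom A B), toFun (x + y) = toFun x + toFun y
  map_smul : ∀ {A B : O} (c : ℂ) (x : Hom A B), toFun (c • x) = c * toFun x
  map_comp : ∀ {A B C : O} (x : Hom A B) (y : Hom B C),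
    toFun (CStarCategory.comp x y) = toFun x * toFun y
  map_ident : ∀ A : O, toFun (CStarCategory.ident A) = 1
  map_star : ∀ {A B : O} (x : Hom A B),
    toFun (CStarCategory.star x) = starRingEnd ℂ (toFun x)

/-- A C*-category is commutative if all diagonal hom-sets are commutative C*-algebras. -/
def CStarCategory.IsCommutative (O : Type u) (Hom : O → O → Type v)
    [∀ A B, NormedAddCommGroup (Hom A B)] [∀ A B, NormedSpace ℂ (Hom A B)]
    [CStarCategory O Hom] : Prop :=
  ∀ (A : O) (x y : Hom A A), CStarCategory.comp x y = CStarCategory.comp y x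

variable {O : Type u} {Hom : O → O → Type v}
    [∀ A B, NormedAddCommGroup (Hom A B)] [∀ A B, NormedSpace ℂ (Hom A B)]
    [CStarCategory O Hom]

/-- `[C;ℂ]_{AB}`: the set of restrictions of `*`-functors `C → ℂ` to the hom-space `C_{AB}`,
with the subspace topology of pointwise convergence (the weak-*-topology). -/
def StarFunctor.restrictionSet (O : Type u) (Hom : O → O → Type v)
    [∀ A B, NormedAddCommGroup (Hom A B)] [∀ A B, NormedSpace ℂ (Hom A B)]
    [CStarCategory O Hom] (A B : O) : Set (Hom A B → ℂ) :=
  Set.range fun ω : StarFunctor O Hom => fun x : Hom A B => ω.toFun x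

/-- The phase equivalence on `[C;ℂ]_{AB}`: `φ ∼ ψ` iff `ψ = u·φ` for a unimodular `u ∈ ℂ`. -/
def StarFunctor.phaseRel (O : Type u) (Hom : O → O → Type v)
    [∀ A B, NormedAddCommGroup (Hom A B)] [∀ A B, NormedSpace ℂ (Hom A B)]
    [CStarCategory O Hom] (A B : O)
    (φ ψ : StarFunctor.restrictionSet O Hom A B) : Prop :=
  ∃ u : ℂ, ‖u‖ = 1 ∧ ∀ x : Hom A B, (ψ : Hom A B → ℂ) x = u * (φ : Hom A B → ℂ) x

/-- `B^C_{AB}`: the quotient of `[C;ℂ]_{AB}` by the phase equivalence, with the quotient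
topology. -/
abbrev StarFunctor.BSpace (O : Type u) (Hom : O → O → Type v)
    [∀ A B, NormedAddCommGroup (Hom A B)] [∀ A B, NormedSpace ℂ (Hom A B)]
    [CStarCategory O Hom] (A B : O) :=
  Quot (StarFunctor.phaseRel O Hom A B)

/-- The set of classes `[ω]_{AB} ∈ B^C_{AB}` of restrictions vanishing identically on
`C_{AB}`; its complement is `X^C_{AB}`. -/
def StarFunctor.zeroClasses (O : Type u) (Hom : O → O → Type v)
    [∀ A B, NormedAddCommGroup (Hom A B)] [∀ A B, NormedSpace ℂ (Hom A B)]
    [CStarCategory O Hom] (A B : O) : Set (StarFunctor.BSpace O Hom A B) :=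
  {q | ∃ φ : StarFunctor.restrictionSet O Hom A B,
    Quot.mk (StarFunctor.phaseRel O Hom A B) φ = q ∧ ∀ x : Hom A B, (φ : Hom A B → ℂ) x = 0}

/-!
Every `*`-functor is contractive on each hom-space: it restricts to a character of the Banach
algebra `C_{BB}`, and `|ω x|² = ω (x* ∘ x)`. Viewed as points of the product of the closed balls
of radius `‖x‖` over all morphisms `x`, the `*`-functors therefore form a closed (the functor
axioms are pointwise equations), hence compact, set; so `[C;ℂ]_{AB}` and its quotient `B^C_{AB}`
are compact. The continuous map `[φ] ↦ ((x, y) ↦ φ x · conj (φ y))` separates phase classes,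
so `B^C_{AB}` is Hausdorff. The zero class, if any, is then a closed point of a compact Hausdorff
space, whose complement is open, locally compact and completely regular, with the whole space as
its one-point compactification.
-/

open Set Topology ComplexConjugate

namespace CStarCategory

theorem zero_comp {A B C : O} (y : Hom B C) : comp (0 : Hom A B) y = 0 := by
  simpa using smul_comp (0 : ℂ) (0 : Hom A B) y

theorem comp_zero {A B C : O} (x : Hom A B) : comp x (0 : Hom B C) = 0 := by
  simpa using comp_smul (0 : ℂ) x (0 : Hom B C)

/-- The C*-identity forces `‖ι_A‖² = ‖ι_A‖`, so `‖ι_A‖` is `0` or `1`. -/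
theorem norm_ident_le_one (A : O) : ‖(ident A : Hom A A)‖ ≤ 1 := by
  have h := norm_star_comp_self (ident A : Hom A A)
  rw [star_ident, comp_ident] at h
  nlinarith [norm_nonneg (ident A : Hom A A)]

variable (Hom) in
/-- The endomorphism algebra `C_{AA}`, as a type synonym carrying its Banach algebra structure. -/
def End (A : O) : Type v := Hom A A

namespace End

variable (A : O)

instance : NormedAddCommGroup (End Hom A) := inferInstanceAs (NormedAddCommGroup (Hom A A))

instance : NormedSpace ℂ (End Hom A) := inferInstanceAs (NormedSpace ℂ (Hom A A))

instance : CompleteSpace (End Hom A) := complete A A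

instance : Ring (End Hom A) where
  mul := comp
  one := ident A
  left_distrib := comp_add
  right_distrib := add_comp
  zero_mul := zero_comp
  mul_zero := comp_zero
  mul_assoc := comp_assoc
  one_mul := ident_comp
  mul_one := comp_ident

instance : NormedRing (End Hom A) where
  dist_eq := NormedAddCommGroup.dist_eq
  norm_mul_le := norm_comp_le

noncomputable instance : NormedAlgebra ℂ (End Hom A) where
  toAlgebra := Algebra.ofModule smul_comp comp_smul
  norm_smul_le := norm_smul_le

end End

end CStarCategory

namespace StarFunctor

open CStarCategory

def toAlgHom (ω : StarFunctor O Hom) (A : O) : End Hom A →ₐ[ℂ] ℂ where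
  toFun := ω.toFun (A := A) (B := A)
  map_one' := ω.map_ident A
  map_mul' := ω.map_comp
  map_zero' := by
    have h := ω.map_smul 0 (0 : Hom A A)
    rwa [zero_smul, zero_mul] at h
  map_add' := ω.map_add
  commutes' c := by
    change ω.toFun (c • ident A) = c
    rw [ω.map_smul, ω.map_ident, mul_one]

/-- Characters of Banach algebras are contractive; apply this to `x* ∘ x ∈ C_{BB}`. -/
theorem norm_toFun_le (ω : StarFunctor O Hom) {A B : O} (x : Hom A B) :
    ‖ω.toFun x‖ ≤ ‖x‖ := by
  have h : ‖ω.toFun x‖ ^ 2 ≤ ‖x‖ ^ 2 :=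
    calc ‖ω.toFun x‖ ^ 2 = ‖ω.toAlgHom B (comp (star x) x)‖ := by
          change _ = ‖ω.toFun (comp (star x) x)‖
          rw [ω.map_comp, ω.map_star, norm_mul, Complex.norm_conj, sq]
      _ ≤ ‖(comp (star x) x : End Hom B)‖ * ‖(1 : End Hom B)‖ :=
          AlgHom.norm_apply_le_self_mul_norm_one _ _
      _ ≤ ‖x‖ ^ 2 := by
          rw [← norm_star_comp_self x]
          exact mul_le_of_le_one_right (norm_nonneg _) (norm_ident_le_one B)
  exact (sq_le_sq₀ (norm_nonneg _) (norm_nonneg _)).mp h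

def eval (ω : StarFunctor O Hom) : (Σ A B : O, Hom A B) → ℂ := fun p => ω.toFun p.2.2

theorem isClosed_range_eval : IsClosed (range (eval (O := O) (Hom := Hom))) := by
  have h : range (eval (O := O) (Hom := Hom)) =
      {f | (∀ A B (x y : Hom A B), f ⟨A, B, x + y⟩ = f ⟨A, B, x⟩ + f ⟨A, B, y⟩) ∧
        (∀ A B (c : ℂ) (x : Hom A B), f ⟨A, B, c • x⟩ = c * f ⟨A, B, x⟩) ∧
        (∀ A B C (x : Hom A B) (y : Hom B C), f ⟨A, C, comp x y⟩ = f ⟨A, B, x⟩ * f ⟨B, C, y⟩) ∧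
        (∀ A, f ⟨A, A, ident A⟩ = 1) ∧
        (∀ A B (x : Hom A B), f ⟨B, A, star x⟩ = conj (f ⟨A, B, x⟩))} := by
    ext f
    constructor
    · rintro ⟨ω, rfl⟩
      exact ⟨fun _ _ => ω.map_add, fun _ _ => ω.map_smul, fun _ _ _ => ω.map_comp, ω.map_ident,
        fun _ _ => ω.map_star⟩
    · rintro ⟨h_add, h_smul, h_comp, h_ident, h_star⟩
      exact ⟨⟨fun x => f ⟨_, _, x⟩, h_add _ _, h_smul _ _, h_comp _ _ _, h_ident, h_star _ _⟩, rfl⟩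
  rw [h]
  simp only [ofPred_and, ofPred_forall]
  repeat' (first | intro _ | apply IsClosed.inter | apply isClosed_iInter | apply isClosed_eq)
  all_goals fun_prop

theorem isCompact_range_eval : IsCompact (range (eval (O := O) (Hom := Hom))) := by
  refine .of_isClosed_subset
    (isCompact_univ_pi fun p : Σ A B : O, Hom A B => isCompact_closedBall (0 : ℂ) ‖p.2.2‖)
    isClosed_range_eval ?_
  rintro _ ⟨ω, rfl⟩ p -
  simpa [eval] using ω.norm_toFun_le p.2.2

variable (A B : O)

theorem restrictionSet_eq_image_range_eval :
    restrictionSet O Hom A B =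
      (fun f : (Σ A B : O, Hom A B) → ℂ => fun x : Hom A B => f ⟨A, B, x⟩) '' range eval := by
  rw [← range_comp]
  rfl

instance : CompactSpace (restrictionSet O Hom A B) := by
  rw [← isCompact_iff_compactSpace, restrictionSet_eq_image_range_eval]
  exact isCompact_range_eval.image (continuous_pi fun _ => continuous_apply _)

end StarFunctor

def phaseCorrelation {X : Type*} (f : X → ℂ) : X × X → ℂ := fun p => f p.1 * conj (f p.2)

theorem exists_norm_eq_one_and_eq_mul_iff {X : Type*} (f g : X → ℂ) :
    (∃ u : ℂ, ‖u‖ = 1 ∧ ∀ x, g x = u * f x) ↔ phaseCorrelation f = phaseCorrelation g := by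
  constructor
  · rintro ⟨u, hu, hg⟩
    have hu' : u * conj u = 1 := by
      rw [Complex.mul_conj, Complex.normSq_eq_norm_sq, hu]; simp
    funext p
    simp only [phaseCorrelation, hg, map_mul]
    linear_combination (-(f p.1 * conj (f p.2))) * hu'
  · intro h
    have hfg (x y : X) : f x * conj (f y) = g x * conj (g y) := congrFun h (x, y)
    by_cases hf : ∀ x, f x = 0
    · refine ⟨1, norm_one, fun x => ?_⟩
      have := hfg x x
      rw [hf x, zero_mul, Complex.mul_conj, eq_comm, Complex.ofReal_eq_zero,
        Complex.normSq_eq_zero] at this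
      rw [this, hf x, mul_zero]
    push Not at hf
    obtain ⟨x₀, hx₀⟩ := hf
    have hnorm : ‖f x₀‖ = ‖g x₀‖ := by
      have := congrArg norm (hfg x₀ x₀)
      simp only [norm_mul, Complex.norm_conj] at this
      nlinarith [norm_nonneg (f x₀), norm_nonneg (g x₀)]
    have hconj : conj (f x₀) ≠ 0 := by simpa using hx₀
    refine ⟨g x₀ / f x₀, by rw [norm_div, hnorm, div_self (hnorm ▸ norm_ne_zero_iff.mpr hx₀)],
      fun x => ?_⟩
    rw [div_mul_eq_mul_div, eq_div_iff hx₀]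
    refine mul_right_cancel₀ hconj ?_
    linear_combination g x * hfg x₀ x₀ - g x₀ * hfg x x₀

theorem Set.Subsingleton.nonempty_homeomorph_onePoint_compl {X : Type*} [TopologicalSpace X]
    [CompactSpace X] [T2Space X] {s : Set X} (hs : s.Subsingleton) {x : X} (hx : x ∈ s) :
    Nonempty (X ≃ₜ OnePoint (sᶜ : Set X)) :=
  ⟨(OnePoint.equivOfIsEmbeddingOfRangeEq x _ IsEmbedding.subtypeVal
    (by rw [Subtype.range_coe, hs.eq_singleton_of_mem hx])).symm⟩

namespace StarFunctor

section

variable (O Hom) (A B : O)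

theorem phaseRel_iff (φ ψ : restrictionSet O Hom A B) :
    phaseRel O Hom A B φ ψ ↔ phaseCorrelation (φ : Hom A B → ℂ) = phaseCorrelation ψ :=
  exists_norm_eq_one_and_eq_mul_iff _ _

def BSpace.correlation : BSpace O Hom A B → Hom A B × Hom A B → ℂ :=
  Quot.lift (fun φ => phaseCorrelation (φ : Hom A B → ℂ)) fun _ _ =>
    (phaseRel_iff O Hom A B _ _).mp

theorem BSpace.correlation_injective : Function.Injective (BSpace.correlation O Hom A B) := by
  rintro ⟨φ⟩ ⟨ψ⟩ h
  exact Quot.sound ((phaseRel_iff O Hom A B φ ψ).mpr h)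

theorem BSpace.continuous_correlation : Continuous (BSpace.correlation O Hom A B) :=
  continuous_quot_lift _ <| continuous_pi fun p =>
    ((continuous_apply p.1).comp continuous_subtype_val).mul
      ((continuous_apply p.2).comp continuous_subtype_val).star

instance : T2Space (BSpace O Hom A B) :=
  .of_injective_continuous (BSpace.correlation_injective O Hom A B)
    (BSpace.continuous_correlation O Hom A B)

theorem zeroClasses_subsingleton : (zeroClasses O Hom A B).Subsingleton := by
  rintro _ ⟨φ, rfl, hφ⟩ _ ⟨ψ, rfl, hψ⟩
  exact Quot.sound ⟨1, norm_one, fun x => by rw [hψ x, hφ x, mul_zero]⟩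

end

theorem mk_mem_zeroClasses {A B : O} {ω : StarFunctor O Hom}
    (hω : ∀ x : Hom A B, ω.toFun x = 0) :
    Quot.mk _ ⟨_, ω, rfl⟩ ∈ zeroClasses O Hom A B :=
  ⟨_, rfl, hω⟩

end StarFunctor

theorem StarFunctor.zeroClasses_and_XSpace_properties_general
    (A B : O) :
    (StarFunctor.zeroClasses O Hom A B).Subsingleton ∧
    IsClosed (StarFunctor.zeroClasses O Hom A B) ∧
    IsOpen (StarFunctor.zeroClasses O Hom A B)ᶜ ∧
    LocallyCompactSpace ((StarFunctor.zeroClasses O Hom A B)ᶜ : Set (StarFunctor.BSpace O Hom A B)) ∧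
    T2Space ((StarFunctor.zeroClasses O Hom A B)ᶜ : Set (StarFunctor.BSpace O Hom A B)) ∧
    CompletelyRegularSpace ((StarFunctor.zeroClasses O Hom A B)ᶜ : Set (StarFunctor.BSpace O Hom A B)) ∧
    ((∃ ω : StarFunctor O Hom, ∀ x : Hom A B, ω.toFun x = 0) →
      Nonempty (StarFunctor.BSpace O Hom A B ≃ₜ
        OnePoint ((StarFunctor.zeroClasses O Hom A B)ᶜ : Set (StarFunctor.BSpace O Hom A B)))) := by
  have hsub := StarFunctor.zeroClasses_subsingleton O Hom A B
  have hopen : IsOpen (StarFunctor.zeroClasses O Hom A B)ᶜ := hsub.isClosed.isOpen_compl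
  refine ⟨hsub, hsub.isClosed, hopen, hopen.locallyCompactSpace, inferInstance, inferInstance, ?_⟩
  rintro ⟨ω, hω⟩
  exact hsub.nonempty_homeomorph_onePoint_compl (StarFunctor.mk_mem_zeroClasses hω)

/-- In `B^C_{AB}` the set of classes of identically vanishing restrictions is
empty or a single point and closed; hence `X^C_{AB}` is open in `B^C_{AB}` and is a locally
compact Hausdorff completely regular space.  If some `ω ∈ [C;ℂ]` vanishes identically on
`C_{AB}` then `B^C_{AB}` is homeomorphic to the one-point (Alexandroff) compactification of
`X^C_{AB}`. -/
theorem StarFunctor.zeroClasses_and_XSpace_properties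
    (hcomm : CStarCategory.IsCommutative O Hom) (A B : O) :
    (StarFunctor.zeroClasses O Hom A B).Subsingleton ∧
    IsClosed (StarFunctor.zeroClasses O Hom A B) ∧
    IsOpen (StarFunctor.zeroClasses O Hom A B)ᶜ ∧
    LocallyCompactSpace ((StarFunctor.zeroClasses O Hom A B)ᶜ : Set (StarFunctor.BSpace O Hom A B)) ∧
    T2Space ((StarFunctor.zeroClasses O Hom A B)ᶜ : Set (StarFunctor.BSpace O Hom A B)) ∧
    CompletelyRegularSpace ((StarFunctor.zeroClasses O Hom A B)ᶜ : Set (StarFunctor.BSpace O Hom A B)) ∧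
    ((∃ ω : StarFunctor O Hom, ∀ x : Hom A B, ω.toFun x = 0) →
      Nonempty (StarFunctor.BSpace O Hom A B ≃ₜ
        OnePoint ((StarFunctor.zeroClasses O Hom A B)ᶜ : Set (StarFunctor.BSpace O Hom A B)))) :=
  StarFunctor.zeroClasses_and_XSpace_properties_general A B
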